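/- arXiv:2602.07997 — 2 statements merged into one kernel-verified Lean document; each statement's English description precedes it below -/
import Mathlib

section
/- Let q ∈ ℕ with q ≥ 1, and let p̃ ∈ (0,1)^{q+1} be a probability vector (entries positive, summing to 1). Let p̂ ∈ ℝ^q denote its first q coordinates and Λ = diag(p̂). Then Λ − p̂ p̂ᵀ ⪯ (3/4)·I_q − (1/(2q))·𝟙_q 𝟙_qᵀ in the Loewner order. -/
open Matrix

set_option maxHeartbeats 1000000

open Finset in

/-- Core scalar inequality: Popoviciu-type bound on a sub-probability "variance". -/
lemma core_ineq {q : ℕ} (hq : 1 ≤ q) (p : Fin q → ℝ) (pl : ℝ)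
    (hp : ∀ i, 0 < p i) (hpl : 0 < pl) (hs : (∑ i, p i) + pl = 1) (x : Fin q → ℝ) :
    ∑ i, p i * x i ^ 2 - (∑ i, p i * x i) ^ 2
      ≤ 3 / 4 * ∑ i, x i ^ 2 - (∑ i, x i) ^ 2 / (2 * (q : ℝ)) := by
  have hqR : (0 : ℝ) < q := by exact_mod_cast hq
  have hne : (Finset.univ : Finset (Fin q)).Nonempty := ⟨⟨0, hq⟩, mem_univ _⟩
  obtain ⟨i₀, -, hi₀⟩ := Finset.exists_max_image univ x hne
  obtain ⟨j₀, -, hj₀⟩ := Finset.exists_min_image univ x hne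
  set M : ℝ := max (x i₀) 0 with hM
  set m : ℝ := min (x j₀) 0 with hm
  have hM0 : 0 ≤ M := le_max_right _ _
  have hm0 : m ≤ 0 := min_le_right _ _
  have hxM : ∀ i, x i ≤ M := fun i => le_trans (hi₀ i (mem_univ i)) (le_max_left _ _)
  have hxm : ∀ i, m ≤ x i := fun i => le_trans (min_le_left _ _) (hj₀ i (mem_univ i))
  set θ : ℝ := (M + m) / 2 with hθ
  set D : ℝ := (M - m) / 2 with hD
  -- Step 1: variance bound
  have step1 : ∑ i, p i * x i ^ 2 - (∑ i, p i * x i) ^ 2 ≤ D ^ 2 := by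
    have key : ∑ i, p i * x i ^ 2 - (∑ i, p i * x i) ^ 2
        = (∑ i, p i * (x i - θ) ^ 2) + pl * θ ^ 2 - ((∑ i, p i * x i) - θ) ^ 2
          - θ ^ 2 * ((∑ i, p i) + pl - 1) := by
      have e1 : ∑ i, p i * (x i - θ) ^ 2
          = ∑ i, p i * x i ^ 2 - 2 * θ * ∑ i, p i * x i + θ ^ 2 * ∑ i, p i := by
        rw [Finset.mul_sum, Finset.mul_sum, ← Finset.sum_sub_distrib, ← Finset.sum_add_distrib]
        exact Finset.sum_congr rfl fun i _ => by ring
      rw [e1]; ring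
    rw [key, hs]
    have b1 : ∑ i, p i * (x i - θ) ^ 2 ≤ (∑ i, p i) * D ^ 2 := by
      rw [Finset.sum_mul]
      refine Finset.sum_le_sum fun i _ => ?_
      refine mul_le_mul_of_nonneg_left ?_ (hp i).le
      have h1 : -D ≤ x i - θ := by
        have := hxm i; rw [hD, hθ]; linarith
      have h2 : x i - θ ≤ D := by
        have := hxM i; rw [hD, hθ]; linarith
      nlinarith
    have b2 : pl * θ ^ 2 ≤ pl * D ^ 2 := by
      refine mul_le_mul_of_nonneg_left ?_ hpl.le
      have h1 : -D ≤ θ := by rw [hD, hθ]; linarith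
      have h2 : θ ≤ D := by rw [hD, hθ]; linarith
      nlinarith
    nlinarith [sq_nonneg ((∑ i, p i * x i) - θ), b1, b2, hs]
  -- Step 2: Popoviciu numerator bound
  have step2 : D ^ 2 ≤ 3 / 4 * ∑ i, x i ^ 2 - (∑ i, x i) ^ 2 / (2 * (q : ℝ)) := by
    have hCS : (∑ i, x i) ^ 2 ≤ (q : ℝ) * ∑ i, x i ^ 2 := by
      have := sq_sum_le_card_mul_sum_sq (s := (univ : Finset (Fin q))) (f := x)
      simpa using this
    have hX2 : (0:ℝ) ≤ ∑ i, x i ^ 2 := Finset.sum_nonneg fun i _ => sq_nonneg _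
    by_cases hA : 0 ≤ x j₀
    · -- all nonnegative: m = 0
      have hmz : m = 0 := min_eq_right hA
      have hMx : M = x i₀ := max_eq_left (le_trans hA (hj₀ i₀ (mem_univ i₀)))
      have hM2 : M ^ 2 ≤ ∑ i, x i ^ 2 := by
        rw [hMx]
        exact Finset.single_le_sum (f := fun i => x i ^ 2) (fun i _ => sq_nonneg _) (mem_univ i₀)
      have hfrac : (∑ i, x i) ^ 2 / (2 * (q : ℝ)) ≤ (∑ i, x i ^ 2) / 2 := by
        rw [div_le_div_iff₀ (by positivity) (by norm_num)]
        nlinarith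
      rw [hD, hmz]
      nlinarith
    · push_neg at hA
      by_cases hB : x i₀ ≤ 0
      · -- all nonpositive: M = 0
        have hMz : M = 0 := max_eq_right hB
        have hmx : m = x j₀ := min_eq_left hA.le
        have hm2 : m ^ 2 ≤ ∑ i, x i ^ 2 := by
          rw [hmx]
          exact Finset.single_le_sum (f := fun i => x i ^ 2) (fun i _ => sq_nonneg _) (mem_univ j₀)
        have hfrac : (∑ i, x i) ^ 2 / (2 * (q : ℝ)) ≤ (∑ i, x i ^ 2) / 2 := by
          rw [div_le_div_iff₀ (by positivity) (by norm_num)]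
          nlinarith
        rw [hD, hMz]
        nlinarith
      · -- mixed case
        push_neg at hB
        have hMx : M = x i₀ := max_eq_left hB.le
        have hmx : m = x j₀ := min_eq_left hA.le
        have hij : i₀ ≠ j₀ := fun h => by rw [h] at hB; exact absurd hB (not_lt.mpr hA.le)
        have hq2 : 2 ≤ q := by
          have : 1 < Fintype.card (Fin q) := Fintype.one_lt_card_iff.mpr ⟨i₀, j₀, hij⟩
          simp at this; omega
        have hq2R : (2 : ℝ) ≤ q := by exact_mod_cast hq2
        set s : Finset (Fin q) := (univ.erase i₀).erase j₀ with hsdef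
        have hjmem : j₀ ∈ univ.erase i₀ := Finset.mem_erase.mpr ⟨hij.symm, mem_univ _⟩
        have hsplit : ∀ f : Fin q → ℝ, ∑ i, f i = f i₀ + (f j₀ + ∑ k ∈ s, f k) := by
          intro f
          rw [← Finset.add_sum_erase _ f (mem_univ i₀), ← Finset.add_sum_erase _ f hjmem]
        have hcard : (s.card : ℝ) = (q : ℝ) - 2 := by
          rw [hsdef, Finset.card_erase_of_mem hjmem, Finset.card_erase_of_mem (mem_univ _),
            Finset.card_univ, Fintype.card_fin]
          rw [Nat.sub_sub]
          push_cast [Nat.cast_sub hq2]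
          ring
        set r : ℝ := ∑ k ∈ s, x k with hr
        set R : ℝ := ∑ k ∈ s, x k ^ 2 with hRdef
        have hR0 : 0 ≤ R := Finset.sum_nonneg fun i _ => sq_nonneg _
        have hr2 : r ^ 2 ≤ ((q : ℝ) - 2) * R := by
          rw [← hcard]
          exact sq_sum_le_card_mul_sum_sq (s := s) (f := x)
        have hCS2 : (x i₀ + x j₀ + r) ^ 2 ≤ ((q : ℝ) - 1) * ((x i₀ + x j₀) ^ 2 + R) := by
          rcases eq_or_lt_of_le hq2R with h2 | h2
          · have hrz : r = 0 := by
              have h0 : r ^ 2 ≤ 0 := by rw [← h2] at hr2; linarith [hr2]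
              nlinarith [sq_nonneg r]
            rw [hrz, ← h2]
            nlinarith [hR0]
          · have hgap : 0 ≤ ((q : ℝ) - 2) *
                (((q : ℝ) - 1) * ((x i₀ + x j₀) ^ 2 + R) - (x i₀ + x j₀ + r) ^ 2) := by
              have hid : ((q : ℝ) - 2) *
                  (((q : ℝ) - 1) * ((x i₀ + x j₀) ^ 2 + R) - (x i₀ + x j₀ + r) ^ 2)
                  = (((q : ℝ) - 2) * (x i₀ + x j₀) - r) ^ 2
                    + ((q : ℝ) - 1) * (((q : ℝ) - 2) * R - r ^ 2) := by ring
              have h1 := sq_nonneg (((q : ℝ) - 2) * (x i₀ + x j₀) - r)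
              have h2' : 0 ≤ ((q : ℝ) - 1) * (((q : ℝ) - 2) * R - r ^ 2) :=
                mul_nonneg (by linarith) (by linarith)
              rw [hid]; linarith
            by_contra hcon
            push_neg at hcon
            nlinarith [hgap, h2]
        have hX1 : ∑ i, x i = x i₀ + x j₀ + r := by rw [hsplit x]; ring
        have hX2e : ∑ i, x i ^ 2 = x i₀ ^ 2 + x j₀ ^ 2 + R := by
          rw [hsplit (fun i => x i ^ 2)]; ring
        have key : (q : ℝ) * (x i₀ - x j₀) ^ 2 + 2 * (∑ i, x i) ^ 2
            ≤ 3 * (q : ℝ) * ∑ i, x i ^ 2 := by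
          rw [hX1, hX2e]
          have hA1 : (0:ℝ) ≤ 2 * (x i₀ + x j₀) ^ 2 := by positivity
          have hA2 : (0:ℝ) ≤ ((q : ℝ) + 2) * R := mul_nonneg (by linarith) hR0
          have hA3 : (0:ℝ) ≤ (q : ℝ) * (x i₀ * (-(x j₀))) :=
            mul_nonneg hqR.le (mul_nonneg hB.le (by linarith : (0:ℝ) ≤ -(x j₀)))
          nlinarith [hCS2, hA1, hA2, hA3]
        have hfrac : (∑ i, x i) ^ 2 / (2 * (q : ℝ))
            ≤ 3 / 4 * ∑ i, x i ^ 2 - ((x i₀ - x j₀) / 2) ^ 2 := by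
          rw [div_le_iff₀ (by positivity)]
          nlinarith [key]
        rw [hD, hMx, hmx]
        linarith
  linarith


/-- Uniform bound for the baseline-softmax covariance matrix: if `p̃` is a
probability vector in `(0,1)^{q+1}` and `p̂` its first `q` coordinates, then
`diag(p̂) - p̂ p̂ᵀ ⪯ (3/4) I_q - (1/(2q)) 𝟙_q 𝟙_qᵀ` in the Loewner order. -/
theorem baseline_softmax_bound {q : ℕ} (hq : 1 ≤ q)
    (ptilde : Fin (q + 1) → ℝ)
    (hpos : ∀ j, 0 < ptilde j) (hlt : ∀ j, ptilde j < 1)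
    (hsum : ∑ j, ptilde j = 1) :
    ((3 / 4 : ℝ) • (1 : Matrix (Fin q) (Fin q) ℝ)
      - (1 / (2 * (q : ℝ))) • Matrix.vecMulVec (fun _ => (1 : ℝ)) (fun _ => (1 : ℝ))
      - (Matrix.diagonal (fun i : Fin q => ptilde i.castSucc)
          - Matrix.vecMulVec (fun i : Fin q => ptilde i.castSucc)
              (fun i : Fin q => ptilde i.castSucc))).PosSemidef := by
  classical
  set p : Fin q → ℝ := fun i => ptilde i.castSucc with hpdef
  have hpsum : (∑ i, p i) + ptilde (Fin.last q) = 1 := by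
    rw [← Fin.sum_univ_castSucc]; exact hsum
  rw [Matrix.posSemidef_iff_dotProduct_mulVec]
  constructor
  · -- Hermitian
    ext i j
    simp only [conjTranspose_apply, Matrix.sub_apply, Matrix.smul_apply, one_apply, vecMulVec_apply,
      diagonal_apply, smul_eq_mul, star_sub, star_trivial]
    by_cases h : i = j
    · subst h; ring
    · simp [h, Ne.symm h]; ring
  · intro x
    have hmv : ∀ u v : Fin q → ℝ, Matrix.vecMulVec u v *ᵥ x = (v ⬝ᵥ x) • u := by
      intro u v; ext i
      simp [Matrix.mulVec, dotProduct, Matrix.vecMulVec_apply, Finset.mul_sum,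
        mul_comm, mul_assoc, mul_left_comm]
    simp only [star_trivial, Matrix.sub_mulVec, Matrix.smul_mulVec, Matrix.one_mulVec,
      hmv, dotProduct_sub, dotProduct_smul, smul_eq_mul]
    have e1 : x ⬝ᵥ x = ∑ i, x i ^ 2 := by
      simp [dotProduct, sq]
    have e2 : (fun _ : Fin q => (1:ℝ)) ⬝ᵥ x = ∑ i, x i := by simp [dotProduct]
    have e3 : x ⬝ᵥ (fun _ : Fin q => (1:ℝ)) = ∑ i, x i := by simp [dotProduct]
    have e4 : p ⬝ᵥ x = ∑ i, p i * x i := by simp [dotProduct]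
    have e5 : x ⬝ᵥ p = ∑ i, p i * x i := by
      simp [dotProduct, mul_comm]
    have e6 : x ⬝ᵥ (Matrix.diagonal p *ᵥ x) = ∑ i, p i * x i ^ 2 := by
      simp only [dotProduct, Matrix.mulVec_diagonal]
      exact Finset.sum_congr rfl fun i _ => by ring
    rw [e1, e2, e3, e4, e5, e6]
    have hcore := core_ineq hq p (ptilde (Fin.last q)) (fun i => hpos _) (hpos _) hpsum x
    have hdiv : (∑ i, x i) ^ 2 / (2 * (q : ℝ)) = 1 / (2 * (q : ℝ)) * ((∑ i, x i) * (∑ i, x i)) := by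
      rw [sq]; ring
    linarith [hcore, hdiv.le, hdiv.ge]
end

section
/- Let f(w) = log(1 + ∑_{k=1}^{q} exp(wᵀ_k x)) for fixed x ∈ ℝ^d, as a function of w ∈ ℝ^{qd}. Then ∇²f(w) ⪯ ((3/4)I_q − (1/(2q))𝟙_q𝟙_qᵀ) ⊗ x xᵀ for all w, i.e., the log-sum-exp composed with linear maps admits a uniform quadratic majorizer. -/
open Matrix Kronecker

section Aux
open Finset


lemma range_sq_aux {q : ℕ} (t : Fin q → ℝ) (A B : ℝ)
    (hA0 : 0 ≤ A) (hB0 : B ≤ 0) (hAt : ∀ k, t k ≤ A) (hBt : ∀ k, B ≤ t k)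
    (hAex : A = 0 ∨ ∃ m, t m = A) (hBex : B = 0 ∨ ∃ n, t n = B) :
    (q : ℝ) * (A - B) ^ 2 + (∑ k, t k) ^ 2 ≤ 2 * q * ∑ k, t k ^ 2 := by
  have hcauchy : (∑ k, t k) ^ 2 ≤ (q : ℝ) * ∑ k, t k ^ 2 := by
    have := sq_sum_le_card_mul_sum_sq (s := (univ : Finset (Fin q))) (f := t)
    simpa using this
  have hQ0 : 0 ≤ ∑ k, t k ^ 2 := Finset.sum_nonneg fun k _ => sq_nonneg _
  have hsq : ∀ m : Fin q, t m ^ 2 ≤ ∑ k, t k ^ 2 := fun m =>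
    Finset.single_le_sum (fun k _ => sq_nonneg (t k)) (mem_univ m)
  rcases eq_or_lt_of_le hA0 with hA | hA
  · -- A = 0
    have hB2 : B ^ 2 ≤ ∑ k, t k ^ 2 := by
      rcases hBex with h | ⟨n, hn⟩
      · simpa [h] using hQ0
      · simpa [hn] using hsq n
    have : (A - B) ^ 2 ≤ ∑ k, t k ^ 2 := by
      rw [← hA]; simpa using hB2
    nlinarith [Nat.cast_nonneg (α := ℝ) q]
  rcases eq_or_lt_of_le hB0 with hB | hB
  · -- B = 0
    have hA2 : A ^ 2 ≤ ∑ k, t k ^ 2 := by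
      rcases hAex with h | ⟨m, hm⟩
      · simpa [h] using hQ0
      · simpa [hm] using hsq m
    have : (A - B) ^ 2 ≤ ∑ k, t k ^ 2 := by
      rw [hB]; simpa using hA2
    nlinarith [Nat.cast_nonneg (α := ℝ) q]
  -- A > 0 > B, both attained
  obtain ⟨m, hm⟩ := hAex.resolve_left (by positivity)
  obtain ⟨n, hn⟩ := hBex.resolve_left (by nlinarith)
  have hmn : m ≠ n := by
    intro h; rw [h, hn] at hm; nlinarith
  have hq2 : 2 ≤ q := by
    by_contra h
    push_neg at h
    interval_cases q
    · exact absurd m.2 (by omega)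
    · exact hmn (Subsingleton.elim m n)
  set s : Finset (Fin q) := (univ.erase m).erase n with hs
  have hns : n ∈ univ.erase m := Finset.mem_erase.2 ⟨hmn.symm, mem_univ n⟩
  have hsplit : ∀ f : Fin q → ℝ, ∑ k, f k = f m + (f n + ∑ k ∈ s, f k) := by
    intro f
    rw [← Finset.add_sum_erase _ f (mem_univ m), ← Finset.add_sum_erase _ f hns]
  have hcard : (s.card : ℝ) = (q : ℝ) - 2 := by
    have : s.card = q - 2 := by
      simp only [hs, Finset.card_erase_of_mem hns, Finset.card_erase_of_mem (mem_univ m), Finset.card_univ, Fintype.card_fin]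
      omega
    rw [this, Nat.cast_sub hq2]; norm_num
  have hC : (∑ k ∈ s, t k) ^ 2 ≤ ((q : ℝ) - 2) * ∑ k ∈ s, t k ^ 2 := by
    have := sq_sum_le_card_mul_sum_sq (s := s) (f := t)
    rw [← hcard]; exact_mod_cast this
  have hQ' : 0 ≤ ∑ k ∈ s, t k ^ 2 := Finset.sum_nonneg fun k _ => sq_nonneg _
  rw [hsplit t, hsplit (fun k => t k ^ 2), hm, hn]
  have hq2' : (2 : ℝ) ≤ (q : ℝ) := by exact_mod_cast hq2
  nlinarith [sq_nonneg ((A + B) - ∑ k ∈ s, t k), sq_nonneg (A + B), hC, hQ', hq2',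
    mul_nonneg (sub_nonneg.2 hq2') hQ', mul_nonneg (sub_nonneg.2 hq2') (sq_nonneg (A + B))]

lemma key_var_bound {q : ℕ} (hq : 1 ≤ q) (p t : Fin q → ℝ)
    (hp : ∀ k, 0 ≤ p k) (hs1 : ∑ k, p k ≤ 1) :
    ∑ k, p k * t k ^ 2 - (∑ k, p k * t k) ^ 2
      ≤ 3 / 4 * ∑ k, t k ^ 2 - (∑ k, t k) ^ 2 / (2 * q) := by
  haveI : Nonempty (Fin q) := ⟨⟨0, hq⟩⟩
  have hqR : (0 : ℝ) < q := by exact_mod_cast hq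
  set A : ℝ := max 0 (univ.sup' univ_nonempty t) with hA
  set B : ℝ := min 0 (univ.inf' univ_nonempty t) with hB
  have hA0 : 0 ≤ A := le_max_left _ _
  have hB0 : B ≤ 0 := min_le_left _ _
  have hAt : ∀ k, t k ≤ A := fun k =>
    le_trans (Finset.le_sup' t (mem_univ k)) (le_max_right _ _)
  have hBt : ∀ k, B ≤ t k := fun k =>
    le_trans (min_le_right _ _) (Finset.inf'_le t (mem_univ k))
  have hAex : A = 0 ∨ ∃ m, t m = A := by
    rcases max_choice 0 (univ.sup' univ_nonempty t) with h | h
    · exact Or.inl (by rw [hA, h])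
    · obtain ⟨m, _, hm⟩ := Finset.exists_mem_eq_sup' univ_nonempty t
      exact Or.inr ⟨m, by rw [hA, h, hm]⟩
  have hBex : B = 0 ∨ ∃ n, t n = B := by
    rcases min_choice 0 (univ.inf' univ_nonempty t) with h | h
    · exact Or.inl (by rw [hB, h])
    · obtain ⟨n, _, hn⟩ := Finset.exists_mem_eq_inf' univ_nonempty t
      exact Or.inr ⟨n, by rw [hB, h, hn]⟩
  have hrange := range_sq_aux t A B hA0 hB0 hAt hBt hAex hBex
  set Q := ∑ k, t k ^ 2 with hQdef
  set S := ∑ k, t k with hSdef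
  set M := ∑ k, p k * t k ^ 2 with hM
  set a := ∑ k, p k * t k with ha
  set σ := ∑ k, p k with hσ
  set m : ℝ := (A + B) / 2 with hm
  -- identity
  have hid : M - a ^ 2 = (∑ k, p k * (t k - m) ^ 2) + (1 - σ) * m ^ 2 - (a - m) ^ 2 := by
    have : ∀ k : Fin q, p k * (t k - m) ^ 2
        = p k * t k ^ 2 - 2 * m * (p k * t k) + m ^ 2 * p k := fun k => by ring
    rw [Finset.sum_congr rfl fun k _ => this k]
    rw [Finset.sum_add_distrib, Finset.sum_sub_distrib, ← Finset.mul_sum, ← Finset.mul_sum]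
    rw [← ha, ← hσ, ← hM]
    ring
  have hR2 : ∀ k, (t k - m) ^ 2 ≤ ((A - B) / 2) ^ 2 := by
    intro k
    apply sq_le_sq'
    · have := hBt k; rw [hm]; linarith
    · have := hAt k; rw [hm]; linarith
  have hm2 : m ^ 2 ≤ ((A - B) / 2) ^ 2 := by
    rw [hm]
    nlinarith [mul_nonneg hA0 (neg_nonneg.2 hB0)]
  have hsum1 : (∑ k, p k * (t k - m) ^ 2) ≤ σ * ((A - B) / 2) ^ 2 := by
    rw [hσ, Finset.sum_mul]
    exact Finset.sum_le_sum fun k _ => mul_le_mul_of_nonneg_left (hR2 k) (hp k)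
  have hσ0 : 0 ≤ σ := Finset.sum_nonneg fun k _ => hp k
  have hvar : M - a ^ 2 ≤ ((A - B) / 2) ^ 2 := by
    rw [hid]
    have h2 : (1 - σ) * m ^ 2 ≤ (1 - σ) * ((A - B) / 2) ^ 2 :=
      mul_le_mul_of_nonneg_left hm2 (by linarith)
    nlinarith [sq_nonneg (a - m)]
  have hcauchy : S ^ 2 ≤ (q : ℝ) * Q := by
    have := sq_sum_le_card_mul_sum_sq (s := (univ : Finset (Fin q))) (f := t)
    rw [hSdef, hQdef]; simpa using this
  have hrw : 3 / 4 * Q - S ^ 2 / (2 * q) - (M - a ^ 2)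
      = (3 * q * Q - 2 * S ^ 2 - 4 * q * (M - a ^ 2)) / (4 * q) := by
    field_simp
    ring
  have hnum : 0 ≤ 3 * (q : ℝ) * Q - 2 * S ^ 2 - 4 * q * (M - a ^ 2) := by
    nlinarith [hrange, hvar, hcauchy, hqR]
  have : 0 ≤ 3 / 4 * Q - S ^ 2 / (2 * (q : ℝ)) - (M - a ^ 2) := by
    rw [hrw]
    positivity
  linarith


noncomputable def skx (x : Fin d → ℝ) (k : Fin q) : ((Fin q × Fin d) → ℝ) →L[ℝ] ℝ :=
  ∑ i, x i • ContinuousLinearMap.proj (k, i)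

lemma skx_apply (x : Fin d → ℝ) (k : Fin q) (u : (Fin q × Fin d) → ℝ) :
    skx x k u = ∑ i, x i * u (k, i) := by
  simp [skx]

lemma skx_single (x : Fin d → ℝ) (k m : Fin q) (i : Fin d) :
    skx x m (Pi.single (k, i) (1:ℝ)) = if m = k then x i else 0 := by
  rw [skx_apply]
  have : ∀ j : Fin d, x j * (Pi.single (k, i) (1:ℝ) : (Fin q × Fin d) → ℝ) (m, j)
      = if (k, i) = (m, j) then x i else 0 := by
    intro j
    rcases eq_or_ne (k, i) (m, j) with h | h
    · obtain ⟨h1, h2⟩ := Prod.mk.injEq .. ▸ h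
      subst h1; subst h2
      simp
    · simp [Pi.single_apply, Ne.symm h, h]
  rw [Finset.sum_congr rfl fun j _ => this j]
  rcases eq_or_ne m k with h | h
  · subst h
    simp [Prod.mk.injEq]
  · simp [Prod.mk.injEq, Ne.symm h, h]

noncomputable def Zx (x : Fin d → ℝ) (w : (Fin q × Fin d) → ℝ) : ℝ :=
  1 + ∑ k : Fin q, Real.exp (skx x k w)

lemma Zx_pos (x : Fin d → ℝ) (w : (Fin q × Fin d) → ℝ) : 0 < Zx x w := by
  have : 0 ≤ ∑ k : Fin q, Real.exp (skx x k w) :=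
    Finset.sum_nonneg fun k _ => (Real.exp_pos _).le
  unfold Zx; linarith

noncomputable def Px (x : Fin d → ℝ) (k : Fin q) (w : (Fin q × Fin d) → ℝ) : ℝ :=
  Real.exp (skx x k w) * (Zx x w)⁻¹

noncomputable def Gx (x : Fin d → ℝ) (w : (Fin q × Fin d) → ℝ) :
    ((Fin q × Fin d) → ℝ) →L[ℝ] ℝ :=
  ∑ k, Px x k w • skx x k

lemma hasFDerivAt_Zx (x : Fin d → ℝ) (w : (Fin q × Fin d) → ℝ) :
    HasFDerivAt (Zx x) (∑ k, Real.exp (skx x k w) • skx x k) w := by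
  have h : ∀ k : Fin q, HasFDerivAt (fun w => Real.exp (skx x k w))
      (Real.exp (skx x k w) • skx x k) w := fun k =>
    (Real.hasDerivAt_exp (skx x k w)).comp_hasFDerivAt w (skx x k).hasFDerivAt
  exact (HasFDerivAt.fun_sum fun k _ => h k).const_add 1

lemma hasFDerivAt_F (x : Fin d → ℝ) (w : (Fin q × Fin d) → ℝ) :
    HasFDerivAt (fun w => Real.log (Zx x w)) (Gx x w) w := by
  have h := (Real.hasDerivAt_log (Zx_pos x w).ne').comp_hasFDerivAt w (hasFDerivAt_Zx x w)
  have e : (Zx x w)⁻¹ • ∑ k : Fin q, Real.exp (skx x k w) • skx x k = Gx x w := by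
    rw [Gx, Finset.smul_sum]
    exact Finset.sum_congr rfl fun k _ => by rw [smul_smul, Px, mul_comm]
  exact e ▸ h

lemma fderiv_F (x : Fin d → ℝ) :
    fderiv ℝ (fun w => Real.log (Zx x w)) = Gx (q := q) x := by
  funext w
  exact (hasFDerivAt_F x w).fderiv

lemma Zinv_smul (x : Fin d → ℝ) (w : (Fin q × Fin d) → ℝ) :
    (Zx x w)⁻¹ • ∑ k : Fin q, Real.exp (skx x k w) • skx x k = Gx x w := by
  rw [Gx, Finset.smul_sum]
  exact Finset.sum_congr rfl fun k _ => by rw [smul_smul, Px, mul_comm]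

noncomputable def dPx (x : Fin d → ℝ) (k : Fin q) (w : (Fin q × Fin d) → ℝ) :
    ((Fin q × Fin d) → ℝ) →L[ℝ] ℝ :=
  Px x k w • skx x k - Px x k w • Gx x w

noncomputable def Hx (x : Fin d → ℝ) (w : (Fin q × Fin d) → ℝ) :
    ((Fin q × Fin d) → ℝ) →L[ℝ] ((Fin q × Fin d) → ℝ) →L[ℝ] ℝ :=
  ∑ k, (dPx x k w).smulRight (skx x k)

lemma hasFDerivAt_Px (x : Fin d → ℝ) (k : Fin q) (w : (Fin q × Fin d) → ℝ) :
    HasFDerivAt (Px x k) (dPx x k w) w := by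
  have h1 : HasFDerivAt (fun w => Real.exp (skx x k w))
      (Real.exp (skx x k w) • skx x k) w :=
    (Real.hasDerivAt_exp (skx x k w)).comp_hasFDerivAt w (skx x k).hasFDerivAt
  have hinv : HasFDerivAt (fun w => (Zx x w)⁻¹)
      ((-(Zx x w ^ 2)⁻¹) • ∑ l : Fin q, Real.exp (skx x l w) • skx x l) w :=
    (hasDerivAt_inv (Zx_pos x w).ne').comp_hasFDerivAt w (hasFDerivAt_Zx x w)
  have h := h1.mul hinv
  have e : Real.exp (skx x k w) • ((-(Zx x w ^ 2)⁻¹) • ∑ l : Fin q, Real.exp (skx x l w) • skx x l)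
      + (Zx x w)⁻¹ • (Real.exp (skx x k w) • skx x k) = dPx x k w := by
    have h2 : (Zx x w)⁻¹ • Real.exp (skx x k w) • skx x k = Px x k w • skx x k := by
      rw [smul_smul, Px, mul_comm]
    have h3 : Real.exp (skx x k w) •
        ((-(Zx x w ^ 2)⁻¹) • ∑ l : Fin q, Real.exp (skx x l w) • skx x l)
        = -(Px x k w • Gx x w) := by
      rw [← Zinv_smul x w, smul_smul, smul_smul]
      ext v
      simp only [ContinuousLinearMap.smul_apply, ContinuousLinearMap.neg_apply, smul_eq_mul, Px,
        sq, mul_inv]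
      ring
    rw [h2, h3, dPx]
    abel
  exact e ▸ h

lemma hasFDerivAt_Gx (x : Fin d → ℝ) (w : (Fin q × Fin d) → ℝ) :
    HasFDerivAt (Gx x) (Hx x w) w := by
  have : HasFDerivAt (fun w => ∑ k, Px x k w • skx x k) (Hx x w) w := by
    exact HasFDerivAt.fun_sum fun k _ => (hasFDerivAt_Px x k w).smul_const (skx x k)
  exact this

lemma second_eval (x : Fin d → ℝ) (w u v : (Fin q × Fin d) → ℝ) :
    iteratedFDeriv ℝ 2 (fun w => Real.log (Zx x w)) w ![u, v] = Hx x w u v := by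
  rw [iteratedFDeriv_two_apply, fderiv_F, (hasFDerivAt_Gx x w).fderiv]
  simp

lemma Gx_single (x : Fin d → ℝ) (w : (Fin q × Fin d) → ℝ) (k : Fin q) (i : Fin d) :
    Gx x w (Pi.single (k, i) (1:ℝ)) = Px x k w * x i := by
  rw [Gx]
  simp only [ContinuousLinearMap.sum_apply, ContinuousLinearMap.smul_apply, skx_single,
    smul_eq_mul, mul_ite, mul_zero]
  simp

lemma Hx_single (x : Fin d → ℝ) (w : (Fin q × Fin d) → ℝ) (k l : Fin q) (i j : Fin d) :
    Hx x w (Pi.single (k, i) (1:ℝ)) (Pi.single (l, j) (1:ℝ))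
      = ((if k = l then Px x k w else 0) - Px x k w * Px x l w) * (x i * x j) := by
  rw [Hx]
  simp only [ContinuousLinearMap.sum_apply, ContinuousLinearMap.smulRight_apply, dPx,
    ContinuousLinearMap.sub_apply, ContinuousLinearMap.smul_apply, skx_single, Gx_single,
    smul_eq_mul]
  rw [Finset.sum_eq_single_of_mem l (Finset.mem_univ l)
    (fun m _ hm => by rw [if_neg hm, mul_zero])]
  rw [if_pos rfl]
  rcases eq_or_ne k l with h | h
  · subst h
    rw [if_pos rfl, if_pos rfl]
    ring
  · simp only [if_neg (Ne.symm h), if_neg h]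
    ring

lemma Px_nonneg (x : Fin d → ℝ) (k : Fin q) (w : (Fin q × Fin d) → ℝ) : 0 ≤ Px x k w :=
  mul_nonneg (Real.exp_pos _).le (inv_nonneg.2 (Zx_pos x w).le)

lemma Px_sum_le_one (x : Fin d → ℝ) (w : (Fin q × Fin d) → ℝ) :
    ∑ k : Fin q, Px x k w ≤ 1 := by
  have h : ∑ k : Fin q, Px x k w = (∑ k : Fin q, Real.exp (skx x k w)) * (Zx x w)⁻¹ := by
    simp only [Px]
    rw [Finset.sum_mul]
  rw [h, ← div_eq_mul_inv, div_le_one (Zx_pos x w)]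
  rw [Zx]; linarith

theorem logsumexp_uniform_majorizer' {q d : ℕ} (hq : 1 ≤ q) (x : Fin d → ℝ) :
    ∀ w : Fin q × Fin d → ℝ,
      ((((3 / 4 : ℝ) • (1 : Matrix (Fin q) (Fin q) ℝ)
          - (1 / (2 * (q : ℝ))) • Matrix.vecMulVec (fun _ => (1 : ℝ)) (fun _ => (1 : ℝ)))
        ⊗ₖ Matrix.vecMulVec x x)
      - Matrix.of (fun ki lj : Fin q × Fin d =>
          iteratedFDeriv ℝ 2
            (fun u : Fin q × Fin d → ℝ =>
              Real.log (1 + ∑ k : Fin q, Real.exp (∑ i : Fin d, u (k, i) * x i)))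
            w ![Pi.single ki 1, Pi.single lj 1])).PosSemidef := by
  intro w
  have hFeq : (fun u : Fin q × Fin d → ℝ =>
      Real.log (1 + ∑ k : Fin q, Real.exp (∑ i : Fin d, u (k, i) * x i)))
      = fun u => Real.log (Zx x u) := by
    funext u
    rw [Zx]
    congr 1
    refine congrArg _ (Finset.sum_congr rfl fun k _ => ?_)
    rw [skx_apply]
    exact congrArg _ (Finset.sum_congr rfl fun i _ => mul_comm _ _)
  set D := ((((3 / 4 : ℝ) • (1 : Matrix (Fin q) (Fin q) ℝ)
          - (1 / (2 * (q : ℝ))) • Matrix.vecMulVec (fun _ => (1 : ℝ)) (fun _ => (1 : ℝ)))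
        ⊗ₖ Matrix.vecMulVec x x)
      - Matrix.of (fun ki lj : Fin q × Fin d =>
          iteratedFDeriv ℝ 2
            (fun u : Fin q × Fin d → ℝ =>
              Real.log (1 + ∑ k : Fin q, Real.exp (∑ i : Fin d, u (k, i) * x i)))
            w ![Pi.single ki 1, Pi.single lj 1])) with hD
  set C : Fin q → Fin q → ℝ := fun k l =>
    ((3 / 4) * (if k = l then 1 else 0) - 1 / (2 * (q : ℝ)))
      - ((if k = l then Px x k w else 0) - Px x k w * Px x l w) with hC
  have hEntry : ∀ (k l : Fin q) (i j : Fin d),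
      D (k, i) (l, j) = C k l * (x i * x j) := by
    intro k l i j
    rw [hD]
    simp only [Matrix.sub_apply, Matrix.kroneckerMap_apply, Matrix.smul_apply,
      Matrix.one_apply, Matrix.vecMulVec_apply, Matrix.of_apply, smul_eq_mul, mul_one]
    rw [hFeq, second_eval, Hx_single, hC]
    ring
  refine posSemidef_iff_dotProduct_mulVec.mpr ⟨?_, ?_⟩
  · -- Hermitian
    ext ⟨k, i⟩ ⟨l, j⟩
    rw [Matrix.conjTranspose_apply, star_trivial, hEntry, hEntry]
    simp only [hC]
    rcases eq_or_ne k l with h | h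
    · subst h; ring
    · simp only [if_neg h, if_neg (Ne.symm h)]; ring
  · intro v
    have hstar : star v = v := rfl
    rw [hstar]
    set t : Fin q → ℝ := fun k => ∑ i, x i * v (k, i) with ht
    have hform : v ⬝ᵥ D.mulVec v = ∑ k, ∑ l, C k l * (t k * t l) := by
      simp only [dotProduct, Matrix.mulVec, dotProduct]
      rw [Fintype.sum_prod_type]
      refine Finset.sum_congr rfl fun k _ => ?_
      have hin : ∀ i : Fin d, (∑ b : Fin q × Fin d, D (k, i) b * v b)
          = x i * (∑ l, C k l * t l) := by
        intro i
        rw [Fintype.sum_prod_type, Finset.mul_sum]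
        refine Finset.sum_congr rfl fun l _ => ?_
        simp only [hEntry, ht, Finset.mul_sum]
        exact Finset.sum_congr rfl fun j _ => by ring
      rw [Finset.sum_congr rfl fun i _ => by rw [hin i]]
      have ht' : ∀ m : Fin q, t m = ∑ i, x i * v (m, i) := fun m => rfl
      rw [show ∑ l, C k l * (t k * t l) = t k * ∑ l, C k l * t l by
        rw [Finset.mul_sum]; exact Finset.sum_congr rfl fun l _ => by ring]
      rw [ht' k, Finset.sum_mul]
      exact Finset.sum_congr rfl fun i _ => by ring
    rw [hform]
    set p : Fin q → ℝ := fun k => Px x k w with hp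
    have hCexp : ∀ k l, C k l * (t k * t l)
        = ((if k = l then (3/4) * t k ^ 2 - p k * t k ^ 2 else 0)
           - 1/(2*(q:ℝ)) * (t k * t l)) + (p k * t k) * (p l * t l) := by
      intro k l
      rw [hC, hp]
      rcases eq_or_ne k l with h | h
      · subst h; simp only [eq_self_iff_true, if_true]; ring
      · simp only [if_neg h]; ring
    have einner : ∀ k : Fin q, ∑ l, C k l * (t k * t l)
        = ((3/4) * t k ^ 2 - p k * t k ^ 2)
          - 1/(2*(q:ℝ)) * (t k * ∑ l, t l) + (p k * t k) * (∑ l, p l * t l) := by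
      intro k
      have h2 : ∑ l, 1/(2*(q:ℝ)) * (t k * t l) = 1/(2*(q:ℝ)) * (t k * ∑ l, t l) := by
        rw [Finset.mul_sum, Finset.mul_sum]
      have h3 : ∑ l, (p k * t k) * (p l * t l) = (p k * t k) * (∑ l, p l * t l) :=
        (Finset.mul_sum _ _ _).symm
      rw [Finset.sum_congr rfl fun l _ => hCexp k l, Finset.sum_add_distrib,
        Finset.sum_sub_distrib, Finset.sum_ite_eq, if_pos (Finset.mem_univ k), h2, h3]
    have hexp : ∑ k, ∑ l, C k l * (t k * t l)
        = (3 / 4 * ∑ k, t k ^ 2 - (∑ k, t k) ^ 2 / (2 * (q:ℝ)))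
          - (∑ k, p k * t k ^ 2 - (∑ k, p k * t k) ^ 2) := by
      have h4 : ∑ k, 1/(2*(q:ℝ)) * (t k * ∑ l, t l) = 1/(2*(q:ℝ)) * ((∑ k, t k) * (∑ k, t k)) := by
        have e : ∀ k : Fin q, 1/(2*(q:ℝ)) * (t k * ∑ l, t l)
            = (1/(2*(q:ℝ)) * ∑ l, t l) * t k := fun k => by ring
        rw [Finset.sum_congr rfl fun k _ => e k, ← Finset.mul_sum]
        ring
      have h5 : ∑ k, (p k * t k) * (∑ l, p l * t l) = (∑ k, p k * t k) * (∑ k, p k * t k) :=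
        (Finset.sum_mul _ _ _).symm
      have h6 : ∑ k, (3/4 * t k ^ 2 - p k * t k ^ 2) = 3/4 * (∑ k, t k ^ 2) - ∑ k, p k * t k ^ 2 := by
        rw [Finset.sum_sub_distrib, Finset.mul_sum]
      rw [Finset.sum_congr rfl fun k _ => einner k, Finset.sum_add_distrib,
        Finset.sum_sub_distrib, h4, h5, h6]
      field_simp
      ring
    rw [hexp]
    have := key_var_bound hq p t (fun k => Px_nonneg x k w) (Px_sum_le_one x w)
    linarith

end Aux

/-- Uniform quadratic majorizer for the baseline log-sum-exp with linear scores: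
the Hessian of `f(w) = log (1 + ∑ₖ exp(wₖᵀ x))` (w.r.t. the stacked parameter
`w ∈ ℝ^{q·d}`) is bounded above in the Loewner order by
`((3/4) I_q − (1/(2q)) 𝟙𝟙ᵀ) ⊗ x xᵀ`, uniformly in `w`. -/
theorem logsumexp_uniform_majorizer {q d : ℕ} (hq : 1 ≤ q) (x : Fin d → ℝ) :
    ∀ w : Fin q × Fin d → ℝ,
      ((((3 / 4 : ℝ) • (1 : Matrix (Fin q) (Fin q) ℝ)
          - (1 / (2 * (q : ℝ))) • Matrix.vecMulVec (fun _ => (1 : ℝ)) (fun _ => (1 : ℝ)))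
        ⊗ₖ Matrix.vecMulVec x x)
      - Matrix.of (fun ki lj : Fin q × Fin d =>
          iteratedFDeriv ℝ 2
            (fun u : Fin q × Fin d → ℝ =>
              Real.log (1 + ∑ k : Fin q, Real.exp (∑ i : Fin d, u (k, i) * x i)))
            w ![Pi.single ki 1, Pi.single lj 1])).PosSemidef :=
  logsumexp_uniform_majorizer' hq x
end
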